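/- For every t ∈ (0,1) the three series η(t) = Σ_{i=1}^∞ X₁(t)X₂(t)⋯X_i(t), ζ(t) = Σ_{i=1}^∞ X₁(t)²X₂(t)²⋯X_i(t)², and θ(t) = Σ_{i=1}^∞ Σ_{j=1}^{i} X₁(t)³⋯X_j(t)³ X_{j+1}(t)²⋯X_i(t)² converge; moreover η and ζ are differentiable on (0,1) and satisfy η'(t) = (η(t)² + ζ(t))/(2t) and ζ'(t) = 2θ(t)/t for all t ∈ (0,1). -/

import Mathlib

open MeasureTheory Real

/-- `X1 t = (1 - log t)⁻¹`, the first iterated logarithm. -/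
noncomputable def X1 (t : ℝ) : ℝ := (1 - Real.log t)⁻¹

/-- `Xi i` is the paper's `X_i` for `i ≥ 1` (`Xi 0` is the identity placeholder);
`X_i = X_1 ∘ X_{i-1}`. -/
noncomputable def Xi : ℕ → ℝ → ℝ
  | 0, t => t
  | n+1, t => X1 (Xi n t)


/-- The general term of the series `η(t) = Σ_{i≥1} X₁(t)⋯X_i(t)`
(Lean index `i` corresponds to the paper's `i+1`). -/
noncomputable def etaTerm (t : ℝ) (i : ℕ) : ℝ := ∏ j ∈ Finset.range (i+1), Xi (j+1) t

/-- The general term of the series `ζ(t) = Σ_{i≥1} X₁²(t)⋯X_i²(t)`. -/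
noncomputable def zetaTerm (t : ℝ) (i : ℕ) : ℝ := ∏ j ∈ Finset.range (i+1), (Xi (j+1) t)^2

/-- The general term of the series
`θ(t) = Σ_{i≥1} Σ_{j=1}^i X₁³⋯X_j³ X_{j+1}²⋯X_i²`. -/
noncomputable def thetaTerm (t : ℝ) (i : ℕ) : ℝ :=
  ∑ j ∈ Finset.range (i+1),
    (∏ l ∈ Finset.range (j+1), (Xi (l+1) t)^3) *
    (∏ l ∈ Finset.Ico (j+1) (i+1), (Xi (l+1) t)^2)

noncomputable def eta (t : ℝ) : ℝ := ∑' i : ℕ, etaTerm t i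
noncomputable def zeta (t : ℝ) : ℝ := ∑' i : ℕ, zetaTerm t i
noncomputable def theta (t : ℝ) : ℝ := ∑' i : ℕ, thetaTerm t i

/-!
Put `d n = -log (X_n t) > 0`. Then `X_{n+1} t = (1 + d n)⁻¹` and
`d (n+1) = log (1 + d n) ≥ 2 d n / (d n + 2)`, so `1 / d n ≤ 1 / d 0 + n / 2`. Hence
`X_{n+1} t ≤ (c + n) / (c + n + 2)` with `c = 2 / d 0`, and the products `P n = X_1 t ⋯ X_{n+1} t`
telescope to `O(1 / n²)`. (The cruder bound `log (1 + d) ≥ d / (1 + d)` only gives `O(1 / n)`.)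

From `X_1' = X_1² / t` one gets `P n' = P n * η_n / t`, where `η_n = P 0 + ⋯ + P n`, and
`(P n ^ 2)' = 2 P n ^ 2 η_n / t`. Both derivative series are dominated by `P n η_n / t`, which is
monotone in `t`, so `η` and `ζ` can be differentiated termwise. Finally `θ = Σ P n ^ 2 η_n` and
`2 Σ P n η_n = η² + ζ`.
-/

open Finset

lemma two_mul_sum_range_mul_partialSum {R : Type*} [CommRing R] (f : ℕ → R) (N : ℕ) :
    2 * ∑ n ∈ range N, f n * ∑ k ∈ range (n + 1), f k
      = (∑ n ∈ range N, f n) ^ 2 + ∑ n ∈ range N, f n ^ 2 := by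
  induction N with
  | zero => simp
  | succ N ih =>
    simp only [sum_range_succ] at ih ⊢
    linear_combination ih

lemma two_mul_tsum_mul_partialSum {R : Type*} [CommRing R] [TopologicalSpace R]
    [IsTopologicalRing R] [T2Space R] {f : ℕ → R} (hf : Summable f) (hf2 : Summable (f · ^ 2))
    (hfS : Summable fun n => f n * ∑ k ∈ range (n + 1), f k) :
    2 * ∑' n, f n * ∑ k ∈ range (n + 1), f k = (∑' n, f n) ^ 2 + ∑' n, f n ^ 2 := by
  refine tendsto_nhds_unique (hfS.hasSum.tendsto_sum_nat.const_mul 2) ?_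
  simpa only [two_mul_sum_range_mul_partialSum] using
    (hf.hasSum.tendsto_sum_nat.pow 2).add hf2.hasSum.tendsto_sum_nat

lemma Xi_mem_Ioo {t : ℝ} (ht : t ∈ Set.Ioo 0 1) (n : ℕ) : Xi n t ∈ Set.Ioo 0 1 := by
  induction n with
  | zero => exact ht
  | succ n ih =>
    have hlog : log (Xi n t) < 0 := log_neg ih.1 ih.2
    exact ⟨inv_pos.2 (by linarith), inv_lt_one_of_one_lt₀ (by linarith)⟩

lemma Xi_le_Xi {x y : ℝ} (hx : 0 < x) (hxy : x ≤ y) (hy : y < 1) (n : ℕ) :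
    Xi n x ≤ Xi n y := by
  induction n with
  | zero => exact hxy
  | succ n ih =>
    have hx' := Xi_mem_Ioo ⟨hx, hxy.trans_lt hy⟩ n
    have hy' := Xi_mem_Ioo ⟨hx.trans_le hxy, hy⟩ n
    have hlog : log (Xi n x) ≤ log (Xi n y) := log_le_log hx'.1 ih
    exact inv_anti₀ (by linarith [log_neg hy'.1 hy'.2]) (by linarith)

lemma etaTerm_pos {t : ℝ} (ht : t ∈ Set.Ioo 0 1) (n : ℕ) : 0 < etaTerm t n :=
  prod_pos fun j _ => (Xi_mem_Ioo ht (j + 1)).1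

lemma etaTerm_le_one {t : ℝ} (ht : t ∈ Set.Ioo 0 1) (n : ℕ) : etaTerm t n ≤ 1 :=
  prod_le_one (fun j _ => (Xi_mem_Ioo ht (j + 1)).1.le) fun j _ => (Xi_mem_Ioo ht (j + 1)).2.le

lemma etaTerm_le_etaTerm {x y : ℝ} (hx : 0 < x) (hxy : x ≤ y) (hy : y < 1) (n : ℕ) :
    etaTerm x n ≤ etaTerm y n :=
  prod_le_prod (fun j _ => (Xi_mem_Ioo ⟨hx, hxy.trans_lt hy⟩ (j + 1)).1.le)
    fun j _ => Xi_le_Xi hx hxy hy (j + 1)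

lemma etaTerm_succ (t : ℝ) (n : ℕ) : etaTerm t (n + 1) = etaTerm t n * Xi (n + 2) t :=
  prod_range_succ _ _

lemma zetaTerm_eq_sq (t : ℝ) (n : ℕ) : zetaTerm t n = etaTerm t n ^ 2 := by
  rw [zetaTerm, etaTerm, prod_pow]

lemma zetaTerm_nonneg (t : ℝ) (n : ℕ) : 0 ≤ zetaTerm t n :=
  zetaTerm_eq_sq t n ▸ sq_nonneg _

lemma zetaTerm_le_etaTerm {t : ℝ} (ht : t ∈ Set.Ioo 0 1) (n : ℕ) : zetaTerm t n ≤ etaTerm t n := by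
  rw [zetaTerm_eq_sq]
  exact pow_le_of_le_one (etaTerm_pos ht n).le (etaTerm_le_one ht n) two_ne_zero

lemma neg_log_Xi_pos {t : ℝ} (ht : t ∈ Set.Ioo 0 1) (n : ℕ) : 0 < -log (Xi n t) :=
  neg_pos.2 (log_neg (Xi_mem_Ioo ht n).1 (Xi_mem_Ioo ht n).2)

lemma neg_log_Xi_succ (t : ℝ) (n : ℕ) : -log (Xi (n + 1) t) = log (1 + -log (Xi n t)) := by
  rw [Xi, X1, log_inv, neg_neg, ← sub_eq_add_neg]

lemma inv_neg_log_Xi_le {t : ℝ} (ht : t ∈ Set.Ioo 0 1) (n : ℕ) :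
    (-log (Xi n t))⁻¹ ≤ (-log t)⁻¹ + n / 2 := by
  induction n with
  | zero => simp [Xi]
  | succ n ih =>
    have hd := neg_log_Xi_pos ht n
    have hinv : (2 * -log (Xi n t) / (-log (Xi n t) + 2))⁻¹ = (-log (Xi n t))⁻¹ + 1 / 2 := by
      generalize -log (Xi n t) = d at hd ⊢
      field_simp
      ring
    have hstep : (-log (Xi (n + 1) t))⁻¹ ≤ (-log (Xi n t))⁻¹ + 1 / 2 := by
      calc (-log (Xi (n + 1) t))⁻¹ ≤ (2 * -log (Xi n t) / (-log (Xi n t) + 2))⁻¹ := by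
            rw [neg_log_Xi_succ]
            exact inv_anti₀ (by positivity) (le_log_one_add_of_nonneg hd.le)
        _ = (-log (Xi n t))⁻¹ + 1 / 2 := hinv
    push_cast
    linarith

lemma Xi_succ_le {t c : ℝ} (ht : t ∈ Set.Ioo 0 1) (hc : 2 * (-log t)⁻¹ ≤ c) (n : ℕ) :
    Xi (n + 1) t ≤ (c + n) / (c + n + 2) := by
  have hd := neg_log_Xi_pos ht n
  have hc0 : 0 < c := (mul_pos two_pos (inv_pos.2 (neg_log_Xi_pos ht 0))).trans_le hc
  have hinv := inv_neg_log_Xi_le ht n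
  have hdc : 2 ≤ (c + n) * -log (Xi n t) := by
    have := mul_le_mul_of_nonneg_right hinv hd.le
    rw [inv_mul_cancel₀ hd.ne'] at this
    nlinarith
  show (1 - log (Xi n t))⁻¹ ≤ _
  rw [inv_eq_one_div, div_le_div_iff₀ (by linarith) (by positivity)]
  linarith

lemma etaTerm_le {t c : ℝ} (ht : t ∈ Set.Ioo 0 1) (hc : 2 * (-log t)⁻¹ ≤ c) (n : ℕ) :
    etaTerm t n ≤ c * (c + 1) / ((c + n + 1) * (c + n + 2)) := by
  have hc0 : 0 < c := (mul_pos two_pos (inv_pos.2 (neg_log_Xi_pos ht 0))).trans_le hc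
  induction n with
  | zero =>
    calc etaTerm t 0 = Xi 1 t := by simp [etaTerm]
      _ ≤ c / (c + 2) := by simpa using Xi_succ_le ht hc 0
      _ = _ := by field_simp; ring
  | succ n ih =>
    have hcn : 0 < c + n := by positivity
    rw [etaTerm_succ]
    calc etaTerm t n * Xi (n + 2) t
        ≤ c * (c + 1) / ((c + n + 1) * (c + n + 2)) * ((c + (n + 1 : ℕ)) / (c + (n + 1 : ℕ) + 2)) :=
          mul_le_mul ih (Xi_succ_le ht hc (n + 1)) (Xi_mem_Ioo ht _).1.le
            ((etaTerm_pos ht n).le.trans ih)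
      _ = _ := by push_cast; field_simp; ring

lemma summable_etaTerm {t : ℝ} (ht : t ∈ Set.Ioo 0 1) : Summable (etaTerm t) := by
  set c := 2 * (-log t)⁻¹
  have hc0 : 0 < c := mul_pos two_pos (inv_pos.2 (neg_log_Xi_pos ht 0))
  have hsq : Summable fun n : ℕ => c * (c + 1) * (1 / ((n + 1 : ℕ) : ℝ) ^ 2) :=
    ((summable_nat_add_iff 1).2 (summable_one_div_nat_pow.2 one_lt_two)).mul_left _
  refine hsq.of_nonneg_of_le (fun n => (etaTerm_pos ht n).le) fun n => ?_
  calc etaTerm t n ≤ c * (c + 1) / ((c + n + 1) * (c + n + 2)) := etaTerm_le ht le_rfl n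
    _ ≤ c * (c + 1) / ((n + 1 : ℕ) : ℝ) ^ 2 := by
        gcongr
        push_cast
        nlinarith
    _ = _ := by ring

noncomputable def etaPartial (t : ℝ) (n : ℕ) : ℝ := ∑ k ∈ range (n + 1), etaTerm t k

lemma etaPartial_succ (t : ℝ) (n : ℕ) :
    etaPartial t (n + 1) = etaPartial t n + etaTerm t (n + 1) :=
  sum_range_succ _ _

lemma etaPartial_nonneg {t : ℝ} (ht : t ∈ Set.Ioo 0 1) (n : ℕ) : 0 ≤ etaPartial t n :=
  sum_nonneg fun k _ => (etaTerm_pos ht k).le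

lemma thetaTerm_eq (t : ℝ) (n : ℕ) : thetaTerm t n = zetaTerm t n * etaPartial t n := by
  rw [thetaTerm, etaPartial, mul_sum]
  refine sum_congr rfl fun j hj => ?_
  have hcube : ∏ l ∈ range (j + 1), Xi (l + 1) t ^ 3
      = etaTerm t j * ∏ l ∈ range (j + 1), Xi (l + 1) t ^ 2 := by
    rw [etaTerm, ← prod_mul_distrib]
    exact prod_congr rfl fun l _ => by ring
  rw [hcube, mul_assoc, prod_range_mul_prod_Ico _ (mem_range.1 hj), zetaTerm]
  ring

lemma hasDerivAt_X1 {x : ℝ} (hx : x ≠ 0) (hlog : log x ≠ 1) : HasDerivAt X1 (X1 x ^ 2 / x) x := by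
  have hne : 1 - log x ≠ 0 := sub_ne_zero.2 (Ne.symm hlog)
  refine (((hasDerivAt_log hx).const_sub 1).inv hne).congr_deriv ?_
  simp only [X1]
  field_simp

lemma hasDerivAt_Xi_succ {t : ℝ} (ht : t ∈ Set.Ioo 0 1) (n : ℕ) :
    HasDerivAt (Xi (n + 1)) (Xi (n + 1) t * etaTerm t n / t) t := by
  induction n with
  | zero =>
    refine (hasDerivAt_X1 ht.1.ne' ((log_neg ht.1 ht.2).trans one_pos).ne).congr_deriv ?_
    simp [etaTerm, Xi, sq]
  | succ n ih =>
    have hX := Xi_mem_Ioo ht (n + 1)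
    refine ((hasDerivAt_X1 hX.1.ne' ((log_neg hX.1 hX.2).trans one_pos).ne).comp t ih).congr_deriv ?_
    rw [etaTerm_succ]
    change _ = X1 (Xi (n + 1) t) * (etaTerm t n * X1 (Xi (n + 1) t)) / t
    field_simp [hX.1.ne']

lemma hasDerivAt_etaTerm {t : ℝ} (ht : t ∈ Set.Ioo 0 1) (n : ℕ) :
    HasDerivAt (etaTerm · n) (etaTerm t n * etaPartial t n / t) t := by
  induction n with
  | zero =>
    convert hasDerivAt_Xi_succ ht 0 using 1
    · ext y; simp [etaTerm]
    · simp [etaPartial, etaTerm]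
  | succ n ih =>
    simp_rw [etaTerm_succ]
    refine (ih.mul (hasDerivAt_Xi_succ ht (n + 1))).congr_deriv ?_
    rw [etaPartial_succ, etaTerm_succ]
    ring

lemma hasDerivAt_zetaTerm {t : ℝ} (ht : t ∈ Set.Ioo 0 1) (n : ℕ) :
    HasDerivAt (zetaTerm · n) (2 * zetaTerm t n * etaPartial t n / t) t := by
  simp_rw [zetaTerm_eq_sq]
  refine ((hasDerivAt_etaTerm ht n).pow 2).congr_deriv ?_
  push_cast
  ring

lemma etaPartial_le_etaPartial {x y : ℝ} (hx : 0 < x) (hxy : x ≤ y) (hy : y < 1) (n : ℕ) :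
    etaPartial x n ≤ etaPartial y n :=
  sum_le_sum fun k _ => etaTerm_le_etaTerm hx hxy hy k

lemma etaPartial_le_eta {t : ℝ} (ht : t ∈ Set.Ioo 0 1) (n : ℕ) : etaPartial t n ≤ eta t :=
  Summable.sum_le_tsum _ (fun k _ => (etaTerm_pos ht k).le) (summable_etaTerm ht)

lemma summable_zetaTerm {t : ℝ} (ht : t ∈ Set.Ioo 0 1) : Summable (zetaTerm t) :=
  (summable_etaTerm ht).of_nonneg_of_le (fun n => zetaTerm_nonneg t n)
    (zetaTerm_le_etaTerm ht)

lemma summable_etaTerm_mul_etaPartial {t : ℝ} (ht : t ∈ Set.Ioo 0 1) :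
    Summable fun n => etaTerm t n * etaPartial t n :=
  ((summable_etaTerm ht).mul_right (eta t)).of_nonneg_of_le
    (fun n => mul_nonneg (etaTerm_pos ht n).le (etaPartial_nonneg ht n))
    fun n => mul_le_mul_of_nonneg_left (etaPartial_le_eta ht n) (etaTerm_pos ht n).le

lemma summable_thetaTerm {t : ℝ} (ht : t ∈ Set.Ioo 0 1) : Summable (thetaTerm t) := by
  refine (summable_etaTerm_mul_etaPartial ht).of_nonneg_of_le (fun n => ?_) fun n => ?_ <;>
    rw [thetaTerm_eq]
  · exact mul_nonneg (zetaTerm_nonneg t n) (etaPartial_nonneg ht n)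
  · exact mul_le_mul_of_nonneg_right (zetaTerm_le_etaTerm ht n) (etaPartial_nonneg ht n)

lemma etaTerm_mul_etaPartial_div_le {a b y : ℝ} (ha : 0 < a) (hb : b < 1) (hy : y ∈ Set.Ioo a b)
    (n : ℕ) : etaTerm y n * etaPartial y n / y ≤ etaTerm b n * etaPartial b n / a := by
  have hy0 : 0 < y := ha.trans hy.1
  have hy1 : y ∈ Set.Ioo 0 1 := ⟨hy0, hy.2.trans hb⟩
  have hb0 : b ∈ Set.Ioo 0 1 := ⟨hy0.trans hy.2, hb⟩
  refine div_le_div₀ (mul_nonneg (etaTerm_pos hb0 n).le (etaPartial_nonneg hb0 n)) ?_ ha hy.1.le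
  exact mul_le_mul (etaTerm_le_etaTerm hy0 hy.2.le hb n) (etaPartial_le_etaPartial hy0 hy.2.le hb n)
    (etaPartial_nonneg hy1 n) (etaTerm_pos hb0 n).le

/-- On `(a, b) ∋ t`, monotonicity of `etaTerm` and `etaPartial` bounds the dominating series
uniformly by its value at `b` divided by `a`. -/
lemma hasDerivAt_tsum_of_norm_le_etaTerm_mul_etaPartial {g g' : ℕ → ℝ → ℝ} {C t : ℝ}
    (ht : t ∈ Set.Ioo 0 1) (hC : 0 ≤ C)
    (hg : ∀ n, ∀ y ∈ Set.Ioo (0 : ℝ) 1, HasDerivAt (g n) (g' n y) y)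
    (hg' : ∀ n, ∀ y ∈ Set.Ioo (0 : ℝ) 1, ‖g' n y‖ ≤ C * (etaTerm y n * etaPartial y n / y))
    (hg0 : Summable (g · t)) :
    HasDerivAt (fun z => ∑' n, g n z) (∑' n, g' n t) t := by
  obtain ⟨a, ha, hat⟩ := exists_between ht.1
  obtain ⟨b, htb, hb⟩ := exists_between ht.2
  have hab : ∀ y ∈ Set.Ioo a b, y ∈ Set.Ioo 0 1 := fun y hy => ⟨ha.trans hy.1, hy.2.trans hb⟩
  refine hasDerivAt_tsum_of_isPreconnected
    (((summable_etaTerm_mul_etaPartial ⟨ht.1.trans htb, hb⟩).div_const a).mul_left C) isOpen_Ioo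
    isPreconnected_Ioo (fun n y hy => hg n y (hab y hy)) (fun n y hy => ?_) ⟨hat, htb⟩ hg0
    ⟨hat, htb⟩
  exact (hg' n y (hab y hy)).trans
    (mul_le_mul_of_nonneg_left (etaTerm_mul_etaPartial_div_le ha hb hy n) hC)

lemma hasDerivAt_eta {t : ℝ} (ht : t ∈ Set.Ioo 0 1) :
    HasDerivAt eta (∑' n, etaTerm t n * etaPartial t n / t) t := by
  refine hasDerivAt_tsum_of_norm_le_etaTerm_mul_etaPartial
    (g' := fun n y => etaTerm y n * etaPartial y n / y) ht zero_le_one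
    (fun n y hy => hasDerivAt_etaTerm hy n) (fun n y hy => ?_) (summable_etaTerm ht)
  rw [one_mul, norm_of_nonneg]
  exact div_nonneg (mul_nonneg (etaTerm_pos hy n).le (etaPartial_nonneg hy n)) hy.1.le

lemma hasDerivAt_zeta {t : ℝ} (ht : t ∈ Set.Ioo 0 1) :
    HasDerivAt zeta (∑' n, 2 * zetaTerm t n * etaPartial t n / t) t := by
  refine hasDerivAt_tsum_of_norm_le_etaTerm_mul_etaPartial
    (g' := fun n y => 2 * zetaTerm y n * etaPartial y n / y) ht zero_le_two
    (fun n y hy => hasDerivAt_zetaTerm hy n) (fun n y hy => ?_) (summable_zetaTerm ht)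
  rw [norm_of_nonneg (div_nonneg (mul_nonneg (mul_nonneg zero_le_two (zetaTerm_nonneg y n))
    (etaPartial_nonneg hy n)) hy.1.le), mul_assoc, mul_div_assoc]
  refine mul_le_mul_of_nonneg_left (div_le_div_of_nonneg_right ?_ hy.1.le) zero_le_two
  exact mul_le_mul_of_nonneg_right (zetaTerm_le_etaTerm hy n) (etaPartial_nonneg hy n)

lemma two_mul_tsum_etaTerm_mul_etaPartial {t : ℝ} (ht : t ∈ Set.Ioo 0 1) :
    2 * ∑' n, etaTerm t n * etaPartial t n = eta t ^ 2 + zeta t := by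
  have h := two_mul_tsum_mul_partialSum (summable_etaTerm ht)
    ((summable_zetaTerm ht).congr (zetaTerm_eq_sq t)) (summable_etaTerm_mul_etaPartial ht)
  simp only [← zetaTerm_eq_sq] at h
  exact h

/-- Convergence of the series `η`, `ζ`, `θ` on `(0,1)`, together with the
differentiation formulas `η' = (η² + ζ)/(2t)` and `ζ' = 2θ/t` (formula (8) of the paper). -/
theorem eta_zeta_theta_summable_and_deriv (t : ℝ) (ht : t ∈ Set.Ioo (0:ℝ) 1) :
    Summable (etaTerm t) ∧ Summable (zetaTerm t) ∧ Summable (thetaTerm t) ∧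
    HasDerivAt eta ((eta t ^ 2 + zeta t) / (2 * t)) t ∧
    HasDerivAt zeta (2 * theta t / t) t := by
  refine ⟨summable_etaTerm ht, summable_zetaTerm ht, summable_thetaTerm ht, ?_, ?_⟩
  · refine (hasDerivAt_eta ht).congr_deriv ?_
    rw [tsum_div_const, ← two_mul_tsum_etaTerm_mul_etaPartial ht, mul_div_mul_left _ _ two_ne_zero]
  · refine (hasDerivAt_zeta ht).congr_deriv ?_
    simp only [theta, thetaTerm_eq, mul_assoc, tsum_mul_left, tsum_div_const]
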